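/- arXiv:math/0601762 — 2 statements merged into one kernel-verified Lean document; each statement's English description precedes it below -/
import Mathlib

section
/- Let Σ be a compact Riemannian 3-manifold and w ∈ (0,2). If α is a smooth 2-form and β a smooth 3-form on Σ satisfying dα = wβ and d∗α + d*β = (w−2)α (where ∗ is the Hodge star on Σ and d* the codifferential), then β = 0. -/
open scoped RealInnerProductSpace

/- STATEMENT 5: Let Σ be a compact Riemannian 3-manifold and w ∈ (0,2).  If α is a smooth
2-form and β a smooth 3-form on Σ with dα = wβ and d∗α + d*β = (w−2)α, then β = 0.
We axiomatise the relevant structure: Ω1, Ω2, Ω3 are the spaces of smooth 1-, 2- and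
3-forms, with the L² inner products on Ω2, Ω3; d1 : Ω1 → Ω2 and d2 : Ω2 → Ω3 are the
exterior derivatives (so d2 ∘ d1 = 0), δ3 : Ω3 → Ω2 is the codifferential (the formal
adjoint of d2 on the compact manifold Σ), and star2 : Ω2 → Ω1 is the Hodge star on
2-forms.  The key point is dd*β = Δβ = w(w−2)β and nonnegativity of the Laplacian. -/
theorem beta_eq_zero_of_indicial_eqs
    {Ω1 Ω2 Ω3 : Type*}
    [AddCommGroup Ω1] [Module ℝ Ω1]
    [NormedAddCommGroup Ω2] [InnerProductSpace ℝ Ω2]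
    [NormedAddCommGroup Ω3] [InnerProductSpace ℝ Ω3]
    (d1 : Ω1 →ₗ[ℝ] Ω2) (d2 : Ω2 →ₗ[ℝ] Ω3) (δ3 : Ω3 →ₗ[ℝ] Ω2) (star2 : Ω2 →ₗ[ℝ] Ω1)
    (hadj : ∀ (ξ : Ω2) (η : Ω3), ⟪d2 ξ, η⟫ = ⟪ξ, δ3 η⟫)
    (hdd : ∀ γ : Ω1, d2 (d1 γ) = 0)
    (w : ℝ) (hw0 : 0 < w) (hw2 : w < 2)
    (α : Ω2) (β : Ω3)
    (heq1 : d2 α = w • β)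
    (heq2 : d1 (star2 α) + δ3 β = (w - 2) • α) :
    β = 0 := by
  have h3 : d2 (δ3 β) = (w * (w - 2)) • β := by
    have := congrArg d2 heq2
    simp only [map_add, hdd, zero_add, map_smul, heq1, smul_smul] at this
    rw [this]; ring_nf
  have h4 : (w * (w - 2)) * ‖β‖ ^ 2 = ‖δ3 β‖ ^ 2 := by
    have := hadj (δ3 β) β
    rw [h3, real_inner_smul_left, real_inner_self_eq_norm_sq,
      real_inner_self_eq_norm_sq] at this
    exact this
  have hneg : w * (w - 2) < 0 := mul_neg_of_pos_of_neg hw0 (by linarith)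
  have hb : ‖β‖ ^ 2 = 0 := by nlinarith [sq_nonneg ‖δ3 β‖, sq_nonneg ‖β‖]
  simpa using pow_eq_zero_iff (n := 2) (by norm_num) |>.mp hb
end

section
/- The weight 2 lies in the exceptional set 𝒟 for the operator d + d* on a 4-dimensional cone over a compact link Σ if and only if there exists a nonzero closed and coclosed 2-form on Σ. -/
open scoped RealInnerProductSpace

/- STATEMENT 7: The weight 2 lies in the exceptional set 𝒟 (i.e. D(2) ≠ 0) if and only if
there exists a nonzero closed and coclosed 2-form on Σ.  If (α,β) solves dα = 2β and
d∗α + d*β = 0 then β is exact and harmonic, hence β = 0 by Hodge theory, and the equations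
reduce to dα = 0 and d(∗α) = 0.  Setup as in Statement 5: Ω1, Ω2, Ω3 spaces of smooth
forms on the compact oriented Riemannian 3-manifold Σ with L² inner products on Ω2, Ω3;
d1, d2 exterior derivatives (d2 ∘ d1 = 0), δ3 the formal adjoint of d2, star2 the Hodge
star on 2-forms (so α is coclosed iff d(∗α) = 0). -/
theorem two_exceptional_iff_closed_coclosed_two_form
    {Ω1 Ω2 Ω3 : Type*}
    [AddCommGroup Ω1] [Module ℝ Ω1]
    [NormedAddCommGroup Ω2] [InnerProductSpace ℝ Ω2]
    [NormedAddCommGroup Ω3] [InnerProductSpace ℝ Ω3]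
    (d1 : Ω1 →ₗ[ℝ] Ω2) (d2 : Ω2 →ₗ[ℝ] Ω3) (δ3 : Ω3 →ₗ[ℝ] Ω2) (star2 : Ω2 →ₗ[ℝ] Ω1)
    (hadj : ∀ (ξ : Ω2) (η : Ω3), ⟪d2 ξ, η⟫ = ⟪ξ, δ3 η⟫)
    (hdd : ∀ γ : Ω1, d2 (d1 γ) = 0) :
    (∃ (α : Ω2) (β : Ω3), ¬(α = 0 ∧ β = 0) ∧
        d2 α = (2 : ℝ) • β ∧
        d1 (star2 α) + δ3 β = ((2 : ℝ) - 2) • α) ↔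
      (∃ α : Ω2, α ≠ 0 ∧ d2 α = 0 ∧ d1 (star2 α) = 0) := by
  constructor
  · rintro ⟨α, β, hne, h1, h2⟩
    rw [show (2:ℝ)-2 = 0 by norm_num, zero_smul] at h2
    have hδ : δ3 β = -d1 (star2 α) := by
      have := h2; linear_combination (norm := abel) this
    have hdδ : d2 (δ3 β) = 0 := by
      rw [hδ, map_neg, hdd, neg_zero]
    have hδ0 : δ3 β = 0 := by
      have h := hadj (δ3 β) β
      rw [hdδ] at h
      simp at h
      exact norm_eq_zero.mp ((pow_eq_zero_iff two_ne_zero).mp h.symm)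
    have hβ0 : β = 0 := by
      have h := hadj α β
      rw [h1, hδ0, inner_zero_right, real_inner_smul_left] at h
      have : ⟪β, β⟫ = 0 := by linarith [h]
      exact inner_self_eq_zero.mp this
    refine ⟨α, ?_, ?_, ?_⟩
    · intro hα; exact hne ⟨hα, hβ0⟩
    · rw [h1, hβ0, smul_zero]
    · have := h2; rw [hδ0, add_zero] at this; exact this
  · rintro ⟨α, hα, h1, h2⟩
    refine ⟨α, 0, fun h => hα h.1, by simp [h1], by simp [h2]⟩
end
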